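/- arXiv:1705.10595 — 3 statements merged into one kernel-verified Lean document; each statement's English description precedes it below -/
import Mathlib

section
/- Serial composition of constructions (Theorem 'composability', part 1): Assume every converter in Σ_H and in Σ_E is contractive, Σ_H and Σ_E are each closed under composition of maps, Σ_E contains the identity map, and every π ∈ Σ_H commutes with every σ ∈ Σ_E (π ∘ σ = σ ∘ π as maps Φ → Φ). If γ ∈ Σ_H constructs the specification S from the specification R with error ε, and π ∈ Σ_H constructs the specification T from S with error δ, then π ∘ γ ∈ Σ_H constructs T from R with error ε + δ. -/
/-- A pseudo-metric on the type of atomic resources. -/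
structure IsPseudoMetric {Φ : Type*} (d : Φ → Φ → ℝ) : Prop where
  nonneg : ∀ r s, 0 ≤ d r s
  refl : ∀ r, d r r = 0
  symm : ∀ r s, d r s = d s r
  triangle : ∀ r s t, d r t ≤ d r s + d s t

/-- The ε-ball around a specification R. -/
def specBall {Φ : Type*} (d : Φ → Φ → ℝ) (R : Set Φ) (ε : ℝ) : Set Φ :=
  {s | ∃ r ∈ R, d r s ≤ ε}

/-- A converter is contractive if it cannot increase the distance. -/
def Contractive {Φ : Type*} (d : Φ → Φ → ℝ) (α : Φ → Φ) : Prop :=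
  ∀ r s, d (α r) (α s) ≤ d r s

/-- S* := the set of all σ s for σ a simulator and s ∈ S. -/
def specStar {Φ : Type*} (SimE : Set (Φ → Φ)) (S : Set Φ) : Set Φ :=
  {t | ∃ σ ∈ SimE, ∃ s ∈ S, t = σ s}

/-- π constructs S from R with error ε: πR ⊆ (S*)^ε. -/
def Constructs {Φ : Type*} (d : Φ → Φ → ℝ) (SimE : Set (Φ → Φ))
    (π : Φ → Φ) (R S : Set Φ) (ε : ℝ) : Prop :=
  π '' R ⊆ specBall d (specStar SimE S) ε

/-
Push the construction of `S` from `R` through `π`. Since `π` is contractive, `π ∘ γ` maps `R` into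
the `ε`-ball of `π(S*)`. Since `π` commutes with every simulator `σ`, `π (σ s) = σ (π s)`, and `σ`
is contractive, `π(S*)` lies in the `δ`-ball of `σ(T*) ⊆ T*`. The triangle inequality then
combines the two balls into the `(ε + δ)`-ball of `T*`.
-/

section

variable {Φ : Type*} {d : Φ → Φ → ℝ} {SimE : Set (Φ → Φ)}

theorem specBall_mono {R R' : Set Φ} (h : R ⊆ R') (ε : ℝ) : specBall d R ε ⊆ specBall d R' ε := by
  rintro s ⟨r, hr, hrs⟩
  exact ⟨r, h hr, hrs⟩

theorem IsPseudoMetric.specBall_specBall_subset (hd : IsPseudoMetric d) (R : Set Φ) (δ ε : ℝ) :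
    specBall d (specBall d R δ) ε ⊆ specBall d R (δ + ε) := by
  rintro s ⟨t, ⟨r, hr, hrt⟩, hts⟩
  exact ⟨r, hr, (hd.triangle r t s).trans (add_le_add hrt hts)⟩

theorem Contractive.image_specBall_subset {α : Φ → Φ} (hα : Contractive d α) (R : Set Φ)
    (ε : ℝ) : α '' specBall d R ε ⊆ specBall d (α '' R) ε := by
  rintro _ ⟨s, ⟨r, hr, hrs⟩, rfl⟩
  exact ⟨α r, Set.mem_image_of_mem α hr, (hα r s).trans hrs⟩

theorem image_specStar_subset (hEcomp : ∀ σ ∈ SimE, ∀ τ ∈ SimE, (σ ∘ τ) ∈ SimE)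
    {σ : Φ → Φ} (hσ : σ ∈ SimE) (S : Set Φ) : σ '' specStar SimE S ⊆ specStar SimE S := by
  rintro _ ⟨_, ⟨τ, hτ, s, hs, rfl⟩, rfl⟩
  exact ⟨σ ∘ τ, hEcomp σ hσ τ hτ, s, hs, rfl⟩

theorem Constructs.specStar_source {π : Φ → Φ} {S T : Set Φ} {δ : ℝ} (h : Constructs d SimE π S T δ)
    (hcomm : ∀ σ ∈ SimE, π ∘ σ = σ ∘ π) (hEcontr : ∀ σ ∈ SimE, Contractive d σ)
    (hEcomp : ∀ σ ∈ SimE, ∀ τ ∈ SimE, (σ ∘ τ) ∈ SimE) :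
    Constructs d SimE π (specStar SimE S) T δ := by
  rintro _ ⟨_, ⟨σ, hσ, s, hs, rfl⟩, rfl⟩
  have hπs : π s ∈ specBall d (specStar SimE T) δ := h (Set.mem_image_of_mem π hs)
  rw [← Function.comp_apply (f := π), hcomm σ hσ, Function.comp_apply]
  exact specBall_mono (image_specStar_subset hEcomp hσ T) δ
    ((hEcontr σ hσ).image_specBall_subset _ δ (Set.mem_image_of_mem σ hπs))

theorem Constructs.comp (hd : IsPseudoMetric d) {γ π : Φ → Φ} {R S T : Set Φ} {ε δ : ℝ}
    (hπ : Contractive d π) (h₁ : Constructs d SimE γ R S ε)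
    (h₂ : Constructs d SimE π (specStar SimE S) T δ) :
    Constructs d SimE (π ∘ γ) R T (δ + ε) :=
  calc (π ∘ γ) '' R = π '' (γ '' R) := Set.image_comp π γ R
    _ ⊆ π '' specBall d (specStar SimE S) ε := Set.image_mono h₁
    _ ⊆ specBall d (π '' specStar SimE S) ε := hπ.image_specBall_subset _ ε
    _ ⊆ specBall d (specBall d (specStar SimE T) δ) ε := specBall_mono h₂ ε
    _ ⊆ specBall d (specStar SimE T) (δ + ε) := hd.specBall_specBall_subset _ δ ε

end

theorem serial_composition_general {Φ : Type*} (d : Φ → Φ → ℝ) (hd : IsPseudoMetric d)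
    (ProtH SimE : Set (Φ → Φ))
    (hHcontr : ∀ α ∈ ProtH, Contractive d α)
    (hEcontr : ∀ σ ∈ SimE, Contractive d σ)
    (hHcomp : ∀ α ∈ ProtH, ∀ β ∈ ProtH, (α ∘ β) ∈ ProtH)
    (hEcomp : ∀ σ ∈ SimE, ∀ τ ∈ SimE, (σ ∘ τ) ∈ SimE)
    (hcomm : ∀ π ∈ ProtH, ∀ σ ∈ SimE, π ∘ σ = σ ∘ π)
    (γ π : Φ → Φ) (hγ : γ ∈ ProtH) (hπ : π ∈ ProtH)
    (R S T : Set Φ) (ε δ : ℝ)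
    (h1 : Constructs d SimE γ R S ε) (h2 : Constructs d SimE π S T δ) :
    (π ∘ γ) ∈ ProtH ∧ Constructs d SimE (π ∘ γ) R T (ε + δ) := by
  refine ⟨hHcomp π hπ γ hγ, ?_⟩
  rw [add_comm]
  exact h1.comp hd (hHcontr π hπ)
    (h2.specStar_source (hcomm π hπ) hEcontr hEcomp)

/-- Serial composition of constructions. -/
theorem serial_composition {Φ : Type*} (d : Φ → Φ → ℝ) (hd : IsPseudoMetric d)
    (ProtH SimE : Set (Φ → Φ))
    (hHcontr : ∀ α ∈ ProtH, Contractive d α)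
    (hEcontr : ∀ σ ∈ SimE, Contractive d σ)
    (hHcomp : ∀ α ∈ ProtH, ∀ β ∈ ProtH, (α ∘ β) ∈ ProtH)
    (hEcomp : ∀ σ ∈ SimE, ∀ τ ∈ SimE, (σ ∘ τ) ∈ SimE)
    (hEid : (id : Φ → Φ) ∈ SimE)
    (hcomm : ∀ π ∈ ProtH, ∀ σ ∈ SimE, π ∘ σ = σ ∘ π)
    (γ π : Φ → Φ) (hγ : γ ∈ ProtH) (hπ : π ∈ ProtH)
    (R S T : Set Φ) (ε δ : ℝ) (hε : 0 ≤ ε) (hδ : 0 ≤ δ)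
    (h1 : Constructs d SimE γ R S ε) (h2 : Constructs d SimE π S T δ) :
    (π ∘ γ) ∈ ProtH ∧ Constructs d SimE (π ∘ γ) R T (ε + δ) :=
  serial_composition_general d hd ProtH SimE hHcontr hEcontr hHcomp hEcomp hcomm γ π hγ hπ R S T ε δ
    h1 h2
end

section
/- Entropy of a key patched with a fresh uniform key (core of the lemma on continuing after a reject): Let n, k ≥ 0, let σ = (σ_θ)_{θ∈{0,1}^n} be a family of positive semidefinite dE×dE matrices with p_guess(Θ|E)_σ ≤ 2^{−k}, and let μ be a positive semidefinite dE×dE matrix with tr(μ) ≤ 1. Define ρ'_θ := 2^{−n} μ + σ_θ for each θ ∈ {0,1}^n. Then p_guess(Θ|E)_{ρ'} ≤ 2^{−n} + 2^{−k}; equivalently, H_min(Θ|E)_{ρ'} ≥ −log₂(2^{−n} + 2^{−k}). -/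
/-!
For any POVM `Γ`, the contribution of the `θ`-independent part `2^{-n} μ` to the success
probability is `∑_θ tr(Γ_θ 2^{-n} μ) = 2^{-n} tr μ ≤ 2^{-n}`, because `∑_θ Γ_θ = 1`; the
remaining part `∑_θ tr(Γ_θ σ_θ)` is at most `p_guess(Θ|E)_σ ≤ 2^{-k}`.
-/

noncomputable section
open Matrix
open scoped ComplexOrder

/-- The guessing probability p_guess(X|E)_ρ: supremum over POVMs (Γ_x)_x of ∑_x tr(Γ_x ρ_x). -/
def pGuess {X E : Type*} [Fintype X] [Fintype E] [DecidableEq E]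
    (ρ : X → Matrix E E ℂ) : ℝ :=
  sSup {p : ℝ | ∃ Γ : X → Matrix E E ℂ,
    (∀ x, (Γ x).PosSemidef) ∧ (∑ x, Γ x = 1) ∧ p = ∑ x, ((Γ x * ρ x).trace).re}

namespace Matrix.PosSemidef

open scoped MatrixOrder

variable {𝕜 n : Type*} [RCLike 𝕜]

theorem trace_mul_nonneg [Fintype n] {A B : Matrix n n 𝕜} (hA : A.PosSemidef)
    (hB : B.PosSemidef) : 0 ≤ (A * B).trace := by
  classical
  set S := CFC.sqrt B
  have hS : Sᴴ = S := (CFC.sqrt_nonneg B).isSelfAdjoint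
  have hSS : S * S = B := CFC.sqrt_mul_sqrt_self B hB.nonneg
  calc 0 ≤ (S * A * S).trace := by
        simpa only [hS] using (hA.conjTranspose_mul_mul_same S).trace_nonneg
    _ = (A * B).trace := by rw [trace_mul_comm, ← mul_assoc, hSS, trace_mul_comm]

theorem one_sub_of_sum_eq_one [DecidableEq n] {X : Type*} [Fintype X] {Γ : X → Matrix n n 𝕜}
    (hΓ : ∀ x, (Γ x).PosSemidef) (hsum : ∑ x, Γ x = 1) (x : X) : (1 - Γ x).PosSemidef :=
  hsum ▸ Finset.single_le_sum (fun y _ => (hΓ y).nonneg) (Finset.mem_univ x)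

end Matrix.PosSemidef

section pGuess

variable {X E : Type*} [Fintype X] [Fintype E] [DecidableEq E]

theorem re_trace_mul_le_re_trace_of_povm {Γ : X → Matrix E E ℂ} (hΓ : ∀ x, (Γ x).PosSemidef)
    (hsum : ∑ x, Γ x = 1) {ρ : Matrix E E ℂ} (hρ : ρ.PosSemidef) (x : X) :
    (Γ x * ρ).trace.re ≤ ρ.trace.re := by
  have h := Complex.nonneg_iff.mp
    ((PosSemidef.one_sub_of_sum_eq_one hΓ hsum x).trace_mul_nonneg hρ)
  rw [sub_mul, one_mul, trace_sub, Complex.sub_re] at h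
  linarith [h.1]

theorem le_pGuess {ρ : X → Matrix E E ℂ} (hρ : ∀ x, (ρ x).PosSemidef)
    {Γ : X → Matrix E E ℂ} (hΓ : ∀ x, (Γ x).PosSemidef) (hsum : ∑ x, Γ x = 1) :
    ∑ x, (Γ x * ρ x).trace.re ≤ pGuess ρ := by
  refine le_csSup ⟨∑ x, (ρ x).trace.re, ?_⟩ ⟨Γ, hΓ, hsum, rfl⟩
  rintro p ⟨Γ', hΓ', hsum', rfl⟩
  exact Finset.sum_le_sum fun x _ => re_trace_mul_le_re_trace_of_povm hΓ' hsum' (hρ x) x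

theorem pGuess_nonneg {ρ : X → Matrix E E ℂ} (hρ : ∀ x, (ρ x).PosSemidef) : 0 ≤ pGuess ρ := by
  refine Real.sSup_nonneg ?_
  rintro p ⟨Γ, hΓ, -, rfl⟩
  exact Finset.sum_nonneg fun x _ => (Complex.nonneg_iff.mp ((hΓ x).trace_mul_nonneg (hρ x))).1

theorem pGuess_le {ρ : X → Matrix E E ℂ} {a : ℝ} (ha : 0 ≤ a)
    (h : ∀ Γ : X → Matrix E E ℂ, (∀ x, (Γ x).PosSemidef) → ∑ x, Γ x = 1 →
      ∑ x, (Γ x * ρ x).trace.re ≤ a) : pGuess ρ ≤ a := by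
  refine Real.sSup_le ?_ ha
  rintro p ⟨Γ, hΓ, hsum, rfl⟩
  exact h Γ hΓ hsum

theorem pGuess_const_add_le {τ : Matrix E E ℂ} (hτ : τ.PosSemidef) {σ : X → Matrix E E ℂ}
    (hσ : ∀ x, (σ x).PosSemidef) :
    pGuess (fun x => τ + σ x) ≤ τ.trace.re + pGuess σ := by
  refine pGuess_le (add_nonneg (Complex.nonneg_iff.mp hτ.trace_nonneg).1 (pGuess_nonneg hσ))
    fun Γ hΓ hsum => ?_
  have hτ_part : ∑ x, (Γ x * τ).trace.re = τ.trace.re := by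
    rw [← Complex.re_sum, ← trace_sum, ← Finset.sum_mul, hsum, one_mul]
  simp only [mul_add, trace_add, Complex.add_re, Finset.sum_add_distrib, hτ_part]
  exact add_le_add_right (le_pGuess hσ hΓ hsum) _

end pGuess

theorem pGuess_patched_key_general {dE n : ℕ} (k : ℝ)
    (σ : (Fin n → Bool) → Matrix (Fin dE) (Fin dE) ℂ)
    (hσpsd : ∀ θ, (σ θ).PosSemidef)
    (hσguess : pGuess σ ≤ (2 : ℝ) ^ (-k))
    (μ : Matrix (Fin dE) (Fin dE) ℂ) (hμpsd : μ.PosSemidef)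
    (hμtr : μ.trace.re ≤ 1) :
    pGuess (fun θ => ((2 : ℂ) ^ n)⁻¹ • μ + σ θ) ≤ ((2 : ℝ) ^ n)⁻¹ + (2 : ℝ) ^ (-k) := by
  have hscale : ((2 : ℂ) ^ n)⁻¹ = (((2 : ℝ) ^ n)⁻¹ : ℝ) := by push_cast; rfl
  have hweight : (((2 : ℂ) ^ n)⁻¹ • μ).trace.re ≤ ((2 : ℝ) ^ n)⁻¹ := by
    rw [trace_smul, hscale, smul_eq_mul, Complex.re_ofReal_mul]
    exact mul_le_of_le_one_right (by positivity) hμtr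
  have hpsd : (((2 : ℂ) ^ n)⁻¹ • μ).PosSemidef := by
    rw [hscale]
    exact hμpsd.smul (by positivity)
  calc _ ≤ (((2 : ℂ) ^ n)⁻¹ • μ).trace.re + pGuess σ := pGuess_const_add_le hpsd hσpsd
    _ ≤ _ := add_le_add hweight hσguess

/-- Entropy of a key patched with a fresh uniform key: if p_guess(Θ|E)_σ ≤ 2^{-k}
and ρ'_θ := 2^{-n} μ + σ_θ, then p_guess(Θ|E)_{ρ'} ≤ 2^{-n} + 2^{-k}. -/
theorem pGuess_patched_key {dE n : ℕ} (k : ℝ) (hk : 0 ≤ k)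
    (σ : (Fin n → Bool) → Matrix (Fin dE) (Fin dE) ℂ)
    (hσpsd : ∀ θ, (σ θ).PosSemidef)
    (hσguess : pGuess σ ≤ (2 : ℝ) ^ (-k))
    (μ : Matrix (Fin dE) (Fin dE) ℂ) (hμpsd : μ.PosSemidef)
    (hμtr : μ.trace.re ≤ 1) :
    pGuess (fun θ => ((2 : ℂ) ^ n)⁻¹ • μ + σ θ) ≤ ((2 : ℝ) ^ n)⁻¹ + (2 : ℝ) ^ (-k) :=
  pGuess_patched_key_general k σ hσpsd hσguess μ hμpsd hμtr

end
end

section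
/- Absorption of simulators into smeared ideal specifications (key step in the proof of the composition theorem): Suppose Σ_E contains the identity map, is closed under composition of maps, and every σ ∈ Σ_E is contractive. Then for every specification T ⊆ Φ and every δ ≥ 0, ((T*)^δ)* ⊆ (T*)^δ. -/
section Specifications

variable {Φ : Type*} {d : Φ → Φ → ℝ} {SimE : Set (Φ → Φ)}

theorem specStar_specStar_subset (hEcomp : ∀ σ ∈ SimE, ∀ τ ∈ SimE, (σ ∘ τ) ∈ SimE)
    (S : Set Φ) : specStar SimE (specStar SimE S) ⊆ specStar SimE S := by
  rintro _ ⟨σ, hσ, _, ⟨τ, hτ, s, hs, rfl⟩, rfl⟩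
  exact ⟨σ ∘ τ, hEcomp σ hσ τ hτ, s, hs, rfl⟩

theorem specStar_specBall_subset (hEcontr : ∀ σ ∈ SimE, Contractive d σ) (R : Set Φ) (ε : ℝ) :
    specStar SimE (specBall d R ε) ⊆ specBall d (specStar SimE R) ε := by
  rintro _ ⟨σ, hσ, s, ⟨r, hr, hrs⟩, rfl⟩
  exact ⟨σ r, ⟨σ, hσ, r, hr, rfl⟩, (hEcontr σ hσ r s).trans hrs⟩

end Specifications

theorem star_ball_star_subset_general {Φ : Type*} (d : Φ → Φ → ℝ)
    (SimE : Set (Φ → Φ))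
    (hEcomp : ∀ σ ∈ SimE, ∀ τ ∈ SimE, (σ ∘ τ) ∈ SimE)
    (hEcontr : ∀ σ ∈ SimE, Contractive d σ)
    (T : Set Φ) (δ : ℝ) :
    specStar SimE (specBall d (specStar SimE T) δ) ⊆ specBall d (specStar SimE T) δ :=
  (specStar_specBall_subset hEcontr _ δ).trans
    (specBall_mono (specStar_specStar_subset hEcomp T) δ)

/-- Absorption of simulators into smeared ideal specifications: ((T*)^δ)* ⊆ (T*)^δ. -/
theorem star_ball_star_subset {Φ : Type*} (d : Φ → Φ → ℝ) (hd : IsPseudoMetric d)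
    (SimE : Set (Φ → Φ))
    (hEid : (id : Φ → Φ) ∈ SimE)
    (hEcomp : ∀ σ ∈ SimE, ∀ τ ∈ SimE, (σ ∘ τ) ∈ SimE)
    (hEcontr : ∀ σ ∈ SimE, Contractive d σ)
    (T : Set Φ) (δ : ℝ) (hδ : 0 ≤ δ) :
    specStar SimE (specBall d (specStar SimE T) δ) ⊆ specBall d (specStar SimE T) δ :=
  star_ball_star_subset_general d SimE hEcomp hEcontr T δ
end
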